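/- arXiv:2402.06019 — 4 statements merged into one kernel-verified Lean document; each statement's English description precedes it below -/
import Mathlib

section
/- The dual cone of C = {x ∈ ℝ^r : eᵀx ≥ √(r-1)·‖x‖₂} is C* = {x ∈ ℝ^r : eᵀx ≥ ‖x‖₂}. -/
noncomputable def enorm {r : ℕ} (x : Fin r → ℝ) : ℝ := Real.sqrt (∑ i, (x i) ^ 2)

def sscCone (r : ℕ) : Set (Fin r → ℝ) :=
  {x | Real.sqrt ((r : ℝ) - 1) * _root_.enorm x ≤ ∑ i, x i}

def dualCone {r : ℕ} (K : Set (Fin r → ℝ)) : Set (Fin r → ℝ) :=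
  {x | ∀ z ∈ K, 0 ≤ ∑ i, x i * z i}

/-!
With `u = e / ‖e‖` the axis and `z = ⟪u, z⟫ u + w`, `w ⊥ u`, Pythagoras turns
`c ‖z‖ ≤ ⟪u, z⟫` into `c ‖w‖ ≤ d ⟪u, z⟫` whenever `c² + d² = 1`: the cone of half-angle `θ`
with `cos θ = c, sin θ = d`. Two such cones with complementary angles are dual to each other:
`⟪y, z⟫ ≥ ⟪u, y⟫⟪u, z⟫ - ‖w_y‖ ‖w_z‖ ≥ 0` by Cauchy–Schwarz, and conversely testing `y` against
the boundary ray of the first cone lying opposite to `y` forces `y` into the second. For the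
all-ones vector `‖e‖² = r = (√(r - 1))² + 1²`.
-/

open scoped RealInnerProductSpace

section CircularCone

variable {E : Type*} [NormedAddCommGroup E] [InnerProductSpace ℝ E]

def circularCone (e : E) (a : ℝ) : Set E := {z | a * ‖z‖ ≤ ⟪e, z⟫}

section UnitAxis

variable {u : E} (hu : ‖u‖ = 1)
include hu

theorem inner_sub_inner_smul_eq_zero (y : E) : ⟪u, y - ⟪u, y⟫ • u⟫ = 0 := by
  rw [inner_sub_right, real_inner_smul_right, real_inner_self_eq_norm_sq, hu]
  ring

theorem inner_eq_inner_mul_inner_add_inner_sub (y z : E) :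
    ⟪y, z⟫ = ⟪u, y⟫ * ⟪u, z⟫ + ⟪y - ⟪u, y⟫ • u, z - ⟪u, z⟫ • u⟫ := by
  have hy := inner_sub_inner_smul_eq_zero hu y
  have hz := inner_sub_inner_smul_eq_zero hu z
  simp only [inner_sub_left, inner_sub_right, real_inner_smul_left, real_inner_smul_right,
    real_inner_self_eq_norm_sq, hu, real_inner_comm u] at hy hz ⊢
  ring

theorem norm_sq_eq_inner_sq_add_norm_sub_sq (y : E) :
    ‖y‖ ^ 2 = ⟪u, y⟫ ^ 2 + ‖y - ⟪u, y⟫ • u‖ ^ 2 := by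
  rw [← real_inner_self_eq_norm_sq, ← real_inner_self_eq_norm_sq,
    inner_eq_inner_mul_inner_add_inner_sub hu y y, sq]

theorem mem_circularCone_iff {c d : ℝ} (hc : 0 < c) (hd : 0 < d) (hcd : c ^ 2 + d ^ 2 = 1)
    (z : E) : z ∈ circularCone u c ↔ c * ‖z - ⟪u, z⟫ • u‖ ≤ d * ⟪u, z⟫ := by
  have hz := norm_sq_eq_inner_sq_add_norm_sub_sq hu z
  set w := z - ⟪u, z⟫ • u
  set q := ⟪u, z⟫
  have hsq : q ^ 2 - (c * ‖z‖) ^ 2 = (d * q) ^ 2 - (c * ‖w‖) ^ 2 := by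
    rw [mul_pow, hz]; linear_combination (-q ^ 2) * hcd
  change c * ‖z‖ ≤ q ↔ _
  constructor
  · intro h
    have hq : 0 ≤ q := le_trans (by positivity) h
    rw [← sq_le_sq₀ (by positivity) (by positivity)]
    nlinarith [pow_le_pow_left₀ (by positivity) h 2]
  · intro h
    have hq : 0 ≤ q := nonneg_of_mul_nonneg_right (le_trans (by positivity) h) hd
    rw [← sq_le_sq₀ (by positivity) hq]
    nlinarith [pow_le_pow_left₀ (by positivity) h 2]

theorem innerDual_circularCone_of_norm_eq_one [CompleteSpace E] {c d : ℝ} (hc : 0 < c)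
    (hd : 0 < d) (hcd : c ^ 2 + d ^ 2 = 1) :
    (ProperCone.innerDual (circularCone u c) : Set E) = circularCone u d := by
  have hdc : d ^ 2 + c ^ 2 = 1 := by linarith
  ext y
  rw [SetLike.mem_coe, ProperCone.mem_innerDual, mem_circularCone_iff hu hd hc hdc]
  set w := y - ⟪u, y⟫ • u
  set p := ⟪u, y⟫
  constructor
  · intro hy
    have hp : 0 ≤ p := by
      have hc1 : c ≤ 1 := by nlinarith
      refine hy (show c * ‖u‖ ≤ ⟪u, u⟫ from ?_)
      rwa [real_inner_self_eq_norm_sq, hu, one_pow, mul_one]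
    have huw : ⟪u, w⟫ = 0 := inner_sub_inner_smul_eq_zero hu y
    set z := (c * ‖w‖) • u - d • w
    have hz : z ∈ circularCone u c := by
      have hzu : ⟪u, z⟫ = c * ‖w‖ := by
        simp only [z, inner_sub_right, real_inner_smul_right, huw, real_inner_self_eq_norm_sq, hu]
        ring
      rw [mem_circularCone_iff hu hc hd hcd, hzu]
      have : z - (c * ‖w‖) • u = -(d • w) := by simp only [z]; abel
      rw [this, norm_neg, norm_smul, Real.norm_of_nonneg hd.le]
      linarith
    have hzy : ⟪z, y⟫ = ‖w‖ * (c * p - d * ‖w‖) := by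
      have hwy : ⟪w, y⟫ = ‖w‖ ^ 2 := by
        calc ⟪w, y⟫ = ⟪w, w⟫ + ⟪w, y - w⟫ := by rw [← inner_add_right, add_sub_cancel]
          _ = ‖w‖ ^ 2 := by
            rw [sub_sub_cancel, real_inner_smul_right, real_inner_comm u w, huw, mul_zero, add_zero,
              real_inner_self_eq_norm_sq]
      simp only [z, inner_sub_left, real_inner_smul_left, hwy]
      ring
    have hnonneg : 0 ≤ ‖w‖ * (c * p - d * ‖w‖) := hzy ▸ hy hz
    rcases (norm_nonneg w).eq_or_lt with hw | hw
    · rw [← hw]; simpa using mul_nonneg hc.le hp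
    · nlinarith
  · intro hy z hz
    rw [mem_circularCone_iff hu hc hd hcd] at hz
    rw [real_inner_comm, inner_eq_inner_mul_inner_add_inner_sub hu]
    have hinner := (abs_le.mp (abs_real_inner_le_norm w (z - ⟪u, z⟫ • u))).1
    have hprod := mul_le_mul hy hz (by positivity) (le_trans (by positivity) hy)
    nlinarith [mul_pos hc hd]

end UnitAxis

theorem circularCone_eq_normalize {e : E} (he : e ≠ 0) (a : ℝ) :
    circularCone e a = circularCone (‖e‖⁻¹ • e) (a / ‖e‖) := by
  ext z
  have hpos : 0 < ‖e‖ := norm_pos_iff.mpr he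
  simp only [circularCone, Set.mem_ofPred_eq, real_inner_smul_left, div_mul_eq_mul_div,
    inv_mul_eq_div, div_le_div_iff_of_pos_right hpos]

theorem innerDual_circularCone [CompleteSpace E] {e : E} {a b : ℝ} (ha : 0 < a) (hb : 0 < b)
    (hab : a ^ 2 + b ^ 2 = ‖e‖ ^ 2) :
    (ProperCone.innerDual (circularCone e a) : Set E) = circularCone e b := by
  have hpos : 0 < ‖e‖ := by
    refine (norm_nonneg e).lt_of_ne fun h => ?_
    rw [← h] at hab
    nlinarith
  have he : e ≠ 0 := norm_pos_iff.mp hpos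
  rw [circularCone_eq_normalize he, circularCone_eq_normalize he]
  refine innerDual_circularCone_of_norm_eq_one (norm_smul_inv_norm he) (by positivity)
    (by positivity) ?_
  rw [div_pow, div_pow, ← add_div, hab, div_self (by positivity)]

end CircularCone

section Coordinates

variable {r : ℕ}

theorem enorm_eq_norm_toLp (x : Fin r → ℝ) : _root_.enorm x = ‖WithLp.toLp 2 x‖ := by
  simp [_root_.enorm, EuclideanSpace.norm_eq]

theorem sum_eq_inner_toLp_one (x : Fin r → ℝ) :
    ∑ i, x i = ⟪WithLp.toLp 2 (1 : Fin r → ℝ), WithLp.toLp 2 x⟫ := by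
  simp [EuclideanSpace.inner_toLp_toLp, dotProduct]

theorem sum_mul_eq_inner_toLp (x z : Fin r → ℝ) :
    ∑ i, x i * z i = ⟪WithLp.toLp 2 z, WithLp.toLp 2 x⟫ := by
  simp [EuclideanSpace.inner_toLp_toLp, dotProduct]

theorem norm_toLp_one_sq : ‖WithLp.toLp 2 (1 : Fin r → ℝ)‖ ^ 2 = r := by
  simp [EuclideanSpace.norm_sq_eq]

theorem dualCone_preimage_toLp (C : Set (EuclideanSpace ℝ (Fin r))) :
    dualCone (WithLp.toLp 2 ⁻¹' C) = WithLp.toLp 2 ⁻¹' ProperCone.innerDual C := by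
  ext y
  simp only [dualCone, Set.mem_preimage, Set.mem_ofPred_eq, SetLike.mem_coe,
    ProperCone.mem_innerDual, sum_mul_eq_inner_toLp]
  exact ⟨fun h z hz => h z.ofLp hz, fun h z hz => h hz⟩

theorem preimage_toLp_circularCone (a : ℝ) :
    WithLp.toLp 2 ⁻¹' circularCone (WithLp.toLp 2 (1 : Fin r → ℝ)) a =
      {x | a * _root_.enorm x ≤ ∑ i, x i} := by
  ext x
  simp only [circularCone, Set.mem_preimage, Set.mem_ofPred_eq, enorm_eq_norm_toLp,
    sum_eq_inner_toLp_one]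

end Coordinates

/-- The dual cone of `C = {x : eᵀx ≥ √(r-1)‖x‖₂}` is `{x : eᵀx ≥ ‖x‖₂}`. -/
theorem dual_sscCone {r : ℕ} (hr : 2 ≤ r) :
    dualCone (sscCone r) = {x : Fin r → ℝ | _root_.enorm x ≤ ∑ i, x i} := by
  have hr' : (0 : ℝ) < r - 1 := by
    have : (2 : ℝ) ≤ r := by exact_mod_cast hr
    linarith
  have hab : Real.sqrt (r - 1) ^ 2 + 1 ^ 2 = ‖WithLp.toLp 2 (1 : Fin r → ℝ)‖ ^ 2 := by
    rw [Real.sq_sqrt hr'.le, norm_toLp_one_sq]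
    ring
  have hC : sscCone r = WithLp.toLp 2 ⁻¹' circularCone (WithLp.toLp 2 1) (Real.sqrt (r - 1)) :=
    (preimage_toLp_circularCone _).symm
  rw [hC, dualCone_preimage_toLp, innerDual_circularCone (Real.sqrt_pos.mpr hr') one_pos hab,
    preimage_toLp_circularCone]
  simp only [one_mul]
end

section
/- Let H ∈ ℝ₊^{r×n} satisfy the NC-SSC, i.e., for each i there exists y ≥ 0 with Hy = e − e_i. Then for any x ≠ 0 with Hᵀx ≥ 0, one has eᵀx > 0. -/
/-- Lemma 3.1: if `H ≥ 0` satisfies the NC-SSC, then any `x ≠ 0` with `Hᵀx ≥ 0`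
has `eᵀx > 0`. -/
theorem etx_pos_of_ncssc {r n : ℕ} (hr : 2 ≤ r) (H : Matrix (Fin r) (Fin n) ℝ)
    (hH : ∀ i j, 0 ≤ H i j)
    (hnc : ∀ i : Fin r, ∃ y : Fin n → ℝ, (∀ j, 0 ≤ y j) ∧
      H.mulVec y = fun j => (1 : ℝ) - (if j = i then 1 else 0))
    (x : Fin r → ℝ) (hx : x ≠ 0) (hdual : ∀ j, 0 ≤ ∑ i, H i j * x i) :
    0 < ∑ i, x i := by
  have key : ∀ i : Fin r, x i ≤ ∑ i, x i := by
    intro i0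
    obtain ⟨y, hy, hHy⟩ := hnc i0
    have h1 : 0 ≤ ∑ j, (∑ i, H i j * x i) * y j :=
      Finset.sum_nonneg fun j _ => mul_nonneg (hdual j) (hy j)
    have h2 : ∑ j, (∑ i, H i j * x i) * y j
        = ∑ i, x i * (H.mulVec y i) := by
      simp only [Matrix.mulVec, dotProduct, Finset.sum_mul, Finset.mul_sum]
      rw [Finset.sum_comm]
      exact Finset.sum_congr rfl fun i _ => Finset.sum_congr rfl fun j _ => by ring
    have h3 : ∑ i, x i * (H.mulVec y i) = (∑ i, x i) - x i0 := by
      rw [hHy]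
      simp only [mul_sub, mul_one, mul_ite, mul_zero, Finset.sum_sub_distrib,
        Finset.sum_ite_eq', Finset.mem_univ, if_true]
    rw [h2, h3] at h1
    linarith
  have hs : 0 ≤ ∑ i, x i := by
    have hsum : ∑ i : Fin r, x i ≤ ∑ _i : Fin r, (∑ i, x i) :=
      Finset.sum_le_sum fun i _ => key i
    rw [Finset.sum_const, Finset.card_univ, Fintype.card_fin, nsmul_eq_mul] at hsum
    by_contra hneg
    push_neg at hneg
    have hr2 : (2:ℝ) ≤ (r:ℝ) := by exact_mod_cast hr
    nlinarith [mul_nonneg (sub_nonneg.mpr hr2) (neg_nonneg.mpr hneg.le)]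
  rcases lt_or_eq_of_le hs with h | h
  · exact h
  · exfalso
    apply hx
    ext i
    have hle : ∀ i : Fin r, x i ≤ 0 := fun i => by linarith [key i]
    have hz : ∑ i : Fin r, -x i = 0 := by
      rw [Finset.sum_neg_distrib, ← h, neg_zero]
    have := (Finset.sum_eq_zero_iff_of_nonneg
      (fun i _ => neg_nonneg.mpr (hle i))).mp hz
    simpa using neg_eq_zero.mp (this i (Finset.mem_univ i))
end

section
/- Let H ∈ ℝ₊^{r×n} satisfy the NC-SSC. Then every x ∈ ℝ^r with eᵀx = 1 and Hᵀx ≥ 0 satisfies 2 − r ≤ x_i ≤ 1 for all i. -/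
/-- Lemma 4.1: under the NC-SSC, any `x` with `eᵀx = 1` and `Hᵀx ≥ 0` satisfies
`2 - r ≤ xᵢ ≤ 1` for all `i`. -/
theorem feasible_bounds {r n : ℕ} (hr : 2 ≤ r) (H : Matrix (Fin r) (Fin n) ℝ)
    (hH : ∀ i j, 0 ≤ H i j)
    (hnc : ∀ i : Fin r, ∃ y : Fin n → ℝ, (∀ j, 0 ≤ y j) ∧
      H.mulVec y = fun j => (1 : ℝ) - (if j = i then 1 else 0))
    (x : Fin r → ℝ) (hsum : (∑ i, x i) = 1) (hdual : ∀ j, 0 ≤ ∑ i, H i j * x i) :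
    ∀ i, 2 - (r : ℝ) ≤ x i ∧ x i ≤ 1 := by
  have hle : ∀ i, x i ≤ 1 := by
    intro i
    obtain ⟨y, hy, hEq⟩ := hnc i
    have key : 0 ≤ ∑ k, x k * H.mulVec y k := by
      have : ∑ k, x k * H.mulVec y k = ∑ j, (∑ k, H k j * x k) * y j := by
        simp only [Matrix.mulVec, dotProduct, Finset.mul_sum, Finset.sum_mul]
        rw [Finset.sum_comm]
        apply Finset.sum_congr rfl; intro j _
        apply Finset.sum_congr rfl; intro k _
        ring
      rw [this]
      exact Finset.sum_nonneg fun j _ => mul_nonneg (hdual j) (hy j)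
    have : ∑ k, x k * H.mulVec y k = 1 - x i := by
      rw [hEq]
      simp only [mul_sub, mul_one, Finset.sum_sub_distrib, hsum]
      congr 1
      rw [Finset.sum_eq_single i]
      · simp
      · intro k _ hk; simp [hk]
      · simp
    linarith [this ▸ key]
  intro i
  refine ⟨?_, hle i⟩
  have h1 : x i = 1 - ∑ k ∈ Finset.univ.erase i, x k := by
    have := Finset.add_sum_erase Finset.univ x (Finset.mem_univ i)
    rw [hsum] at this
    linarith
  have h2 : ∑ k ∈ Finset.univ.erase i, x k ≤ (r : ℝ) - 1 := by
    calc ∑ k ∈ Finset.univ.erase i, x k ≤ ∑ k ∈ Finset.univ.erase i, (1 : ℝ) :=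
          Finset.sum_le_sum fun k _ => hle k
      _ = ((Finset.univ.erase i).card : ℝ) := by simp
      _ = (r : ℝ) - 1 := by
          rw [Finset.card_erase_of_mem (Finset.mem_univ i)]
          simp [Nat.cast_sub (by omega : 1 ≤ r)]
  linarith
end

section
/- Let H ∈ ℝ₊^{r×n} satisfy the NC-SSC. Then the supremum of ‖x‖₂ over {x : eᵀx = 1, Hᵀx ≥ 0} equals 1 if and only if the supremum of ‖x‖₂ over {x : eᵀx = 1, Hᵀx ≥ 0, −1 ≤ x_i ≤ 1 for all i} equals 1. -/
noncomputable def euclidNorm {r : ℕ} (x : Fin r → ℝ) : ℝ := Real.sqrt (∑ i, (x i) ^ 2)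

/-!
Under the NC-SSC every feasible `x` satisfies `x i ≤ 1`, because `1 - x i = xᵀ H y ≥ 0` for the
certificate `y ≥ 0` with `H y = e - eᵢ`. If a feasible `x` leaves the box, its smallest coordinate
`x m` is below `-1`; moving from `x` towards a unit vector `e_j` with `j ≠ m` (feasible since
`H ≥ 0`) we reach a feasible point of the box whose `m`-th coordinate is exactly `-1`, and such a
point has norm greater than `1`. So both suprema equal `1` exactly when every feasible point of the
box has norm at most `1`, the value `1` being attained by the unit vectors.
-/

open Finset

/-- Unbounded sets of reals have junk supremum `0`, hence the condition `c ≠ 0`. -/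
lemma sSup_eq_iff_forall_le_of_mem {S : Set ℝ} {c : ℝ} (hc : c ≠ 0) (hcS : c ∈ S) :
    sSup S = c ↔ ∀ s ∈ S, s ≤ c := by
  refine ⟨fun h s hs => ?_, fun h => IsGreatest.csSup_eq ⟨hcS, fun s hs => h s hs⟩⟩
  have hbdd : BddAbove S := by
    by_contra hS
    exact hc (h ▸ Real.sSup_of_not_bddAbove hS)
  exact h ▸ le_csSup hbdd hs

lemma euclidNorm_le_one_iff {r : ℕ} {x : Fin r → ℝ} : euclidNorm x ≤ 1 ↔ ∑ i, x i ^ 2 ≤ 1 :=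
  Real.sqrt_le_one

lemma euclidNorm_single {r : ℕ} (i : Fin r) : euclidNorm (Pi.single i (1 : ℝ)) = 1 := by
  simp [euclidNorm, Pi.single_apply, apply_ite (· ^ 2)]

lemma one_lt_sum_sq_of_sum_eq_one {ι : Type*} [Fintype ι] [DecidableEq ι] {z : ι → ℝ}
    (hsum : ∑ i, z i = 1) {m : ι} (hm : z m ≤ -1) : 1 < ∑ i, z i ^ 2 := by
  have hrest : ∑ i ∈ univ.erase m, z i ≠ 0 := by
    rw [← add_sum_erase univ z (mem_univ m)] at hsum
    linarith
  obtain ⟨a, ha, hza⟩ := exists_ne_zero_of_sum_ne_zero hrest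
  have ham : a ≠ m := ne_of_mem_erase ha
  calc 1 < z m ^ 2 + z a ^ 2 := by nlinarith [sq_pos_of_ne_zero hza]
    _ = ∑ i ∈ {m, a}, z i ^ 2 := (sum_pair (f := fun i => z i ^ 2) ham.symm).symm
    _ ≤ ∑ i, z i ^ 2 := sum_le_sum_of_subset_of_nonneg (subset_univ _) fun i _ _ => sq_nonneg _

lemma single_one_apply_nonneg_and_le_one {ι : Type*} [DecidableEq ι] (i k : ι) :
    0 ≤ (Pi.single i 1 : ι → ℝ) k ∧ (Pi.single i 1 : ι → ℝ) k ≤ 1 := by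
  rw [Pi.single_apply]
  split_ifs <;> norm_num

section Feasible

variable {ι κ : Type*} [Fintype ι] {H : Matrix ι κ ℝ}

lemma le_one_of_mulVec_eq_one_sub [Fintype κ] [DecidableEq ι] {i : ι}
    (hnc : ∃ y : κ → ℝ, (∀ j, 0 ≤ y j) ∧
      H.mulVec y = fun j => (1 : ℝ) - (if j = i then 1 else 0))
    {x : ι → ℝ} (hsum : ∑ i, x i = 1) (hpos : ∀ j, 0 ≤ ∑ i, H i j * x i) : x i ≤ 1 := by
  obtain ⟨y, hy, hHy⟩ := hnc
  have hdot : x ⬝ᵥ H.mulVec y = 1 - x i := by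
    simp [hHy, dotProduct, mul_sub, sum_sub_distrib, hsum]
  have hnonneg : 0 ≤ Matrix.vecMul x H ⬝ᵥ y :=
    sum_nonneg fun j _ =>
      mul_nonneg (by simpa [Matrix.vecMul, dotProduct, mul_comm] using hpos j) (hy j)
  rw [← Matrix.dotProduct_mulVec, hdot] at hnonneg
  linarith

variable [DecidableEq ι]

lemma sum_mul_single_nonneg (hH : ∀ i j, 0 ≤ H i j) (i : ι) (j : κ) :
    0 ≤ ∑ k, H k j * (Pi.single i 1 : ι → ℝ) k := by
  simpa [Pi.single_apply] using hH i j

/-- The point `z` is `t x + (1 - t) e_j` with `t = -1 / x m`, so that `z m = -1`. -/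
lemma exists_feasible_mem_box_eq_neg_one [Nontrivial ι] (hH : ∀ i j, 0 ≤ H i j) {x : ι → ℝ}
    (hsum : ∑ i, x i = 1) (hpos : ∀ j, 0 ≤ ∑ i, H i j * x i) (hle : ∀ i, x i ≤ 1)
    {k : ι} (hk : x k < -1) :
    ∃ z : ι → ℝ, ∑ i, z i = 1 ∧ (∀ j, 0 ≤ ∑ i, H i j * z i) ∧
      (∀ i, -1 ≤ z i ∧ z i ≤ 1) ∧ ∃ m, z m = -1 := by
  obtain ⟨m, -, hm⟩ := exists_min_image univ x univ_nonempty
  obtain ⟨j, hjm⟩ := exists_ne m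
  have hxm : x m < -1 := (hm k (mem_univ k)).trans_lt hk
  set t := -(x m)⁻¹
  have htxm : t * x m = -1 := by simp [t, inv_mul_cancel₀ (by linarith : x m ≠ 0)]
  have ht0 : 0 ≤ t := by nlinarith
  have ht1 : t ≤ 1 := by nlinarith
  set e : ι → ℝ := Pi.single j 1
  refine ⟨fun i => t * x i + (1 - t) * e i, ?_, fun l => ?_, fun i => ⟨?_, ?_⟩, m, ?_⟩
  · simp only [sum_add_distrib, ← mul_sum, hsum, e, sum_pi_single', mem_univ, if_true]
    ring
  · have hsplit : ∑ i, H i l * (t * x i + (1 - t) * e i) =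
        t * ∑ i, H i l * x i + (1 - t) * ∑ i, H i l * e i := by
      simp only [mul_add, sum_add_distrib, mul_left_comm _ t, mul_left_comm _ (1 - t), ← mul_sum]
    rw [hsplit]
    have := sum_mul_single_nonneg hH j l
    have := hpos l
    positivity
  · nlinarith [mul_le_mul_of_nonneg_left (hm i (mem_univ i)) ht0,
      (single_one_apply_nonneg_and_le_one j i).1]
  · nlinarith [mul_le_mul_of_nonneg_left (hle i) ht0, (single_one_apply_nonneg_and_le_one j i).2]
  · simp [e, hjm.symm, htxm]

lemma sum_sq_le_one_of_mem_box [Fintype κ] [Nontrivial ι] (hH : ∀ i j, 0 ≤ H i j)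
    (hnc : ∀ i : ι, ∃ y : κ → ℝ, (∀ j, 0 ≤ y j) ∧
      H.mulVec y = fun j => (1 : ℝ) - (if j = i then 1 else 0))
    (hbox : ∀ z : ι → ℝ, ∑ i, z i = 1 → (∀ j, 0 ≤ ∑ i, H i j * z i) →
      (∀ i, -1 ≤ z i ∧ z i ≤ 1) → ∑ i, z i ^ 2 ≤ 1)
    {x : ι → ℝ} (hsum : ∑ i, x i = 1) (hpos : ∀ j, 0 ≤ ∑ i, H i j * x i) :
    ∑ i, x i ^ 2 ≤ 1 := by
  have hle : ∀ i, x i ≤ 1 := fun i => le_one_of_mulVec_eq_one_sub (hnc i) hsum hpos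
  by_cases hx : ∀ i, -1 ≤ x i
  · exact hbox x hsum hpos fun i => ⟨hx i, hle i⟩
  push Not at hx
  obtain ⟨k, hk⟩ := hx
  obtain ⟨z, hzsum, hzpos, hzbox, m, hzm⟩ :=
    exists_feasible_mem_box_eq_neg_one hH hsum hpos hle hk
  exact absurd (hbox z hzsum hzpos hzbox) (one_lt_sum_sq_of_sum_eq_one hzsum hzm.le).not_ge

end Feasible

/-- Lemma 4.2: under the NC-SSC, the supremum of `‖x‖₂` over
`{x : eᵀx = 1, Hᵀx ≥ 0}` equals 1 iff the supremum of `‖x‖₂` over the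
box-constrained set `{x : eᵀx = 1, Hᵀx ≥ 0, -1 ≤ xᵢ ≤ 1}` equals 1. -/
theorem sup_eq_one_iff_box {r n : ℕ} (hr : 2 ≤ r) (H : Matrix (Fin r) (Fin n) ℝ)
    (hH : ∀ i j, 0 ≤ H i j)
    (hnc : ∀ i : Fin r, ∃ y : Fin n → ℝ, (∀ j, 0 ≤ y j) ∧
      H.mulVec y = fun j => (1 : ℝ) - (if j = i then 1 else 0)) :
    sSup {t : ℝ | ∃ x : Fin r → ℝ,
        (∑ i, x i) = 1 ∧ (∀ j, 0 ≤ ∑ i, H i j * x i) ∧ euclidNorm x = t} = 1 ↔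
    sSup {t : ℝ | ∃ x : Fin r → ℝ,
        (∑ i, x i) = 1 ∧ (∀ j, 0 ≤ ∑ i, H i j * x i) ∧
        (∀ i, -1 ≤ x i ∧ x i ≤ 1) ∧ euclidNorm x = t} = 1 := by
  have : Nontrivial (Fin r) := Fin.nontrivial_iff_two_le.mpr hr
  let i₀ : Fin r := ⟨0, by omega⟩
  rw [sSup_eq_iff_forall_le_of_mem one_ne_zero ?one_mem,
    sSup_eq_iff_forall_le_of_mem one_ne_zero ?one_mem_box]
  · constructor
    · rintro h _ ⟨x, hsum, hpos, -, rfl⟩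
      exact h _ ⟨x, hsum, hpos, rfl⟩
    · rintro h _ ⟨x, hsum, hpos, rfl⟩
      refine euclidNorm_le_one_iff.2
        (sum_sq_le_one_of_mem_box hH hnc (fun z hzsum hzpos hzbox => ?_) hsum hpos)
      exact euclidNorm_le_one_iff.1 (h _ ⟨z, hzsum, hzpos, hzbox, rfl⟩)
  case one_mem =>
    exact ⟨_, by simp, sum_mul_single_nonneg hH i₀, euclidNorm_single i₀⟩
  case one_mem_box =>
    refine ⟨_, by simp, sum_mul_single_nonneg hH i₀, fun k => ?_, euclidNorm_single i₀⟩
    have := single_one_apply_nonneg_and_le_one i₀ k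
    constructor <;> linarith
end
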